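/- In Kretschmer's setting with α > 0, let 0 ≤ δ ≤ γ < 1 and b := χ_{[0,δ] ∪ [γ,1]}. Then val(P_b) = α and the primal problem (P_b) has an optimal solution (namely (x, r) = (0, 1)); val(D_b) = min{1, α} and the dual problem (D_b) has an optimal solution; moreover val(P_b) = val(D_b) if and only if α ≤ 1, if and only if ∂v(b) ≠ ∅. -/

import Mathlib

/-!
Write `S = [0,δ] ∪ [γ,1]`. Since `b = 1` on `(γ,1)` and the tails `∫_t^1 x` of a feasible `x`
vanish as `t → 1`, every feasible `(x, r)` has `r ≥ 1`, so `v(b) = α`, attained at `(0, 1)`.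
Dually, letting `t → 1` in `∫_0^t z ≤ t` gives `∫_0^1 z ≤ 1`, so the dual objective is at most
`min 1 α`; it is attained by the density `min 1 α / (1 - γ)` on `(γ, 1] ⊆ S`.

If `α ≤ 1`, this dual solution is a subgradient at `b`: by weak duality (Fubini on the triangle
`t < s`) it satisfies `⟨y, z⟩ ≤ v(y)` for every `y`, and `⟨b, z⟩ = α = v(b)`. Conversely, the value
at `χ_{S \ (t,1]}` is at most `1`, witnessed by `(χ_{(t,1]} / (1 - t), 0)`, so the subgradient
inequality there gives `α ≤ 1 + ∫_t^1 |z|` for every `t < 1`, hence `α ≤ 1`.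
-/

open MeasureTheory

/-- Lebesgue measure on `[0,1]`. -/
noncomputable def mu : Measure ℝ := volume.restrict (Set.Icc (0 : ℝ) 1)

lemma mu_ne_top (s : Set ℝ) : mu s ≠ ⊤ := by
  have h1 : mu s ≤ mu Set.univ := measure_mono (Set.subset_univ s)
  have h2 : mu Set.univ = ENNReal.ofReal 1 := by
    simp [mu, Measure.restrict_apply_univ, Real.volume_Icc]
  exact ne_top_of_le_ne_top (by simp [h2]) h1

/-- Feasibility of `(x, r)` for the primal problem with right-hand side `y`. -/
def Feas (y : ℝ → ℝ) (p : (ℝ → ℝ) × ℝ) : Prop :=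
  MemLp p.1 2 mu ∧ (∀ᵐ t ∂mu, 0 ≤ p.1 t) ∧ 0 ≤ p.2 ∧
  ∀ᵐ t ∂mu, y t ≤ (∫ s in Set.Ioc t 1, p.1 s ∂mu) + p.2

/-- The cost `c*(x,r) = ∫_0^1 t x(t) dt + α r`. -/
noncomputable def cost (α : ℝ) (p : (ℝ → ℝ) × ℝ) : ℝ :=
  (∫ t, t * p.1 t ∂mu) + α * p.2

/-- Kretschmer's value function on `Y = L²[0,1]`. -/
noncomputable def val (α : ℝ) (y : Lp ℝ 2 mu) : EReal :=
  ⨅ (p : (ℝ → ℝ) × ℝ) (_ : Feas (⇑y) p), ((cost α p : ℝ) : EReal)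

/-- Dual feasibility: `z ∈ L²₊`, `∫_0^t z ≤ t` a.e. and `∫_0^1 z ≤ α`. -/
def DFeas (α : ℝ) (z : ℝ → ℝ) : Prop :=
  MemLp z 2 mu ∧ (∀ᵐ t ∂mu, 0 ≤ z t) ∧
  (∀ᵐ t ∂mu, (∫ s in Set.Ioc 0 t, z s ∂mu) ≤ t) ∧ (∫ t, z t ∂mu) ≤ α

/-- The value of the dual problem with right-hand side `b`. -/
noncomputable def valD (α : ℝ) (b : ℝ → ℝ) : EReal :=
  ⨆ (z : ℝ → ℝ) (_ : DFeas α z), ((∫ t, b t * z t ∂mu : ℝ) : EReal)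

/-- The subdifferential of the value function at `b ∈ L²`, with `(L²)* ≅ L²`. -/
noncomputable def subdiffL2 (α : ℝ) (b : Lp ℝ 2 mu) : Set (Lp ℝ 2 mu) :=
  {z | ∃ r : ℝ, val α b = (r : EReal) ∧
    ∀ y : Lp ℝ 2 mu, (((inner ℝ (y - b) z : ℝ) + r : ℝ) : EReal) ≤ val α y}

/-- The indicator function of a measurable set `s ⊆ ℝ` as an element of `L²[0,1]`. -/
noncomputable def chiLp (s : Set ℝ) (hs : MeasurableSet s) : Lp ℝ 2 mu :=
  indicatorConstLp 2 hs (mu_ne_top s) (1 : ℝ)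

open Filter Set Topology

instance : IsFiniteMeasure mu := ⟨lt_top_iff_ne_top.2 (mu_ne_top univ)⟩

instance : NullSingletonClass mu := by unfold mu; infer_instance

lemma ae_mem_Icc_mu : ∀ᵐ t ∂mu, t ∈ Icc (0 : ℝ) 1 := ae_restrict_mem measurableSet_Icc

lemma mu_real_Ioc {a b : ℝ} (ha : 0 ≤ a) (hb : b ≤ 1) : mu.real (Ioc a b) = max (b - a) 0 := by
  rw [mu, measureReal_restrict_apply measurableSet_Ioc,
    inter_eq_left.2 (Ioc_subset_Icc_self.trans (Icc_subset_Icc ha hb)), Real.volume_real_Ioc]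

lemma mu_restrict_Ioi (t : ℝ) : mu.restrict (Ioi t) = mu.restrict (Ioc t 1) := by
  rw [mu, Measure.restrict_restrict measurableSet_Ioi, Measure.restrict_restrict measurableSet_Ioc]
  congr 1
  ext u
  simp only [mem_inter_iff, mem_Ioi, mem_Ioc, mem_Icc]
  tauto

lemma mu_restrict_Iio {s : ℝ} (hs : s ≤ 1) : mu.restrict (Iio s) = mu.restrict (Ioc 0 s) := by
  rw [mu, Measure.restrict_restrict measurableSet_Iio, Measure.restrict_restrict measurableSet_Ioc,
    inter_eq_left.2 (Ioc_subset_Icc_self.trans (Icc_subset_Icc le_rfl hs))]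
  have : Iio s ∩ Icc 0 1 = Ico 0 s := by
    ext u
    simp only [mem_inter_iff, mem_Iio, mem_Icc, mem_Ico]
    exact ⟨fun ⟨hu, hu0, _⟩ => ⟨hu0, hu⟩, fun ⟨hu0, hu⟩ => ⟨hu, hu0, hu.le.trans hs⟩⟩
  rw [this]
  exact Measure.restrict_congr_set Ico_ae_eq_Ioc

lemma frequently_nhdsLT_one_of_ae {p : ℝ → Prop} (hp : ∀ᵐ t ∂mu, p t) :
    ∃ᶠ t in 𝓝[<] (1 : ℝ), p t := by
  intro h
  obtain ⟨a, ha, hsub⟩ := mem_nhdsLT_iff_exists_Ioo_subset.1 h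
  have hnull : mu (Ioo (max a 0) 1) = 0 :=
    measure_mono_null (fun t ht => hsub ⟨(le_max_left a 0).trans_lt ht.1, ht.2⟩) (ae_iff.1 hp)
  rw [mu, Measure.restrict_apply measurableSet_Ioo,
    inter_eq_left.2 (Ioo_subset_Icc_self.trans (Icc_subset_Icc (le_max_right a 0) le_rfl)),
    Real.volume_Ioo, ENNReal.ofReal_eq_zero] at hnull
  linarith [max_lt (mem_Iio.1 ha) zero_lt_one]

lemma tendsto_setIntegral_Ioc_one {f : ℝ → ℝ} (hf : Integrable f mu) :
    Tendsto (fun t => ∫ s in Ioc t 1, f s ∂mu) (𝓝[<] 1) (𝓝 0) := by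
  have hcont : Continuous fun t => ∫ s in 1..t, f s ∂mu :=
    intervalIntegral.continuous_primitive (fun _ _ => hf.intervalIntegrable) 1
  have hlim : Tendsto (fun t => ∫ s in t..1, f s ∂mu) (𝓝 1) (𝓝 0) := by
    simpa [intervalIntegral.integral_symm 1] using (hcont.tendsto 1).neg
  exact (hlim.mono_left nhdsWithin_le_nhds).congr'
    (eventually_nhdsWithin_of_forall fun t ht => intervalIntegral.integral_of_le (le_of_lt ht))

lemma val_le_cost {α : ℝ} {y : Lp ℝ 2 mu} {p : (ℝ → ℝ) × ℝ} (hp : Feas y p) :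
    val α y ≤ (cost α p : EReal) :=
  iInf₂_le p hp

lemma le_val {α c : ℝ} {y : Lp ℝ 2 mu} (h : ∀ p, Feas y p → c ≤ cost α p) :
    (c : EReal) ≤ val α y :=
  le_iInf₂ fun p hp => EReal.coe_le_coe_iff.2 (h p hp)

lemma feas_zero_one {y : ℝ → ℝ} (hy : ∀ᵐ t ∂mu, y t ≤ 1) : Feas y (fun _ => 0, 1) :=
  ⟨memLp_const 0, ae_of_all _ fun _ => le_rfl, zero_le_one, by simpa using hy⟩

lemma cost_zero_one (α : ℝ) : cost α (fun _ => 0, 1) = α := by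
  simp [cost]

lemma integral_mul_fst_nonneg {y : ℝ → ℝ} {p : (ℝ → ℝ) × ℝ} (hp : Feas y p) :
    0 ≤ ∫ t, t * p.1 t ∂mu :=
  integral_nonneg_of_ae <| by
    filter_upwards [ae_mem_Icc_mu, hp.2.1] with t ht hx using mul_nonneg ht.1 hx

lemma one_le_snd_of_feas {γ : ℝ} (hγ : γ < 1) {y : ℝ → ℝ}
    (hyγ : ∀ᵐ t ∂mu, t ∈ Ioo γ 1 → 1 ≤ y t) {p : (ℝ → ℝ) × ℝ} (hp : Feas y p) : 1 ≤ p.2 := by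
  have hlim : Tendsto (fun t => (∫ s in Ioc t 1, p.1 s ∂mu) + p.2) (𝓝[<] 1) (𝓝 p.2) := by
    simpa using (tendsto_setIntegral_Ioc_one (hp.1.integrable one_le_two)).add_const p.2
  refine ge_of_tendsto_of_frequently hlim ?_
  exact ((frequently_nhdsLT_one_of_ae (hyγ.and hp.2.2.2)).and_eventually (Ioo_mem_nhdsLT hγ)).mono
    fun t ⟨⟨h1, h2⟩, ht⟩ => (h1 ht).trans h2

theorem val_eq_of_le_one {α γ : ℝ} (hα : 0 ≤ α) (hγ : γ < 1) {y : Lp ℝ 2 mu}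
    (hy1 : ∀ᵐ t ∂mu, y t ≤ 1) (hyγ : ∀ᵐ t ∂mu, t ∈ Ioo γ 1 → 1 ≤ y t) :
    val α y = α := by
  refine le_antisymm ?_ (le_val fun p hp => ?_)
  · simpa [cost_zero_one] using val_le_cost (α := α) (feas_zero_one hy1)
  · have h1 := one_le_snd_of_feas hγ hyγ hp
    have h2 := integral_mul_fst_nonneg hp
    rw [cost]
    nlinarith

noncomputable def spike (t : ℝ) : ℝ → ℝ := (Ioc t 1).indicator fun _ => (1 - t)⁻¹

lemma spike_nonneg {t : ℝ} (ht1 : t ≤ 1) (u : ℝ) : 0 ≤ spike t u :=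
  indicator_nonneg (fun _ _ => inv_nonneg.2 (sub_nonneg.2 ht1)) u

lemma setIntegral_spike {s t : ℝ} (ht0 : 0 ≤ t) (ht1 : t < 1) (hs : s ≤ t) :
    ∫ u in Ioc s 1, spike t u ∂mu = 1 := by
  rw [spike, setIntegral_indicator measurableSet_Ioc, inter_eq_right.2 (Ioc_subset_Ioc_left hs),
    setIntegral_const, mu_real_Ioc ht0 le_rfl, max_eq_left (by linarith), smul_eq_mul,
    mul_inv_cancel₀ (by linarith)]

lemma feas_spike {t : ℝ} (ht0 : 0 ≤ t) (ht1 : t < 1) {y : ℝ → ℝ} (hy1 : ∀ᵐ s ∂mu, y s ≤ 1)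
    (hyt : ∀ᵐ s ∂mu, t < s → y s ≤ 0) : Feas y (spike t, 0) := by
  have hspike := spike_nonneg ht1.le
  refine ⟨memLp_indicator_const 2 measurableSet_Ioc _ (Or.inr (mu_ne_top _)),
    ae_of_all _ hspike, le_rfl, ?_⟩
  filter_upwards [hy1, hyt] with s hs1 hst
  rw [add_zero]
  rcases le_or_gt s t with h | h
  · rw [setIntegral_spike ht0 ht1 h]
    exact hs1
  · exact (hst h).trans (setIntegral_nonneg measurableSet_Ioc fun u _ => hspike u)

lemma cost_spike_le_one (α : ℝ) {t : ℝ} (ht0 : 0 ≤ t) (ht1 : t < 1) : cost α (spike t, 0) ≤ 1 := by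
  have hspike := spike_nonneg ht1.le
  have hmass : ∫ u, spike t u ∂mu = 1 := by
    rw [spike, integral_indicator_const _ measurableSet_Ioc, mu_real_Ioc ht0 le_rfl,
      max_eq_left (by linarith), smul_eq_mul, mul_inv_cancel₀ (by linarith)]
  have hle : ∫ u, u * spike t u ∂mu ≤ ∫ u, spike t u ∂mu :=
    integral_mono_of_nonneg
      (by filter_upwards [ae_mem_Icc_mu] with u hu using mul_nonneg hu.1 (hspike u))
      ((integrable_const _).indicator measurableSet_Ioc)
      (by filter_upwards [ae_mem_Icc_mu] with u hu using
        mul_le_of_le_one_left (hspike u) hu.2)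
  simpa [cost, hmass] using hle

lemma val_le_one {α t : ℝ} (ht0 : 0 ≤ t) (ht1 : t < 1) {y : Lp ℝ 2 mu}
    (hy1 : ∀ᵐ s ∂mu, y s ≤ 1) (hyt : ∀ᵐ s ∂mu, t < s → y s ≤ 0) : val α y ≤ 1 := by
  exact_mod_cast (val_le_cost (feas_spike ht0 ht1 hy1 hyt)).trans
    (EReal.coe_le_coe_iff.2 (cost_spike_le_one α ht0 ht1))

noncomputable def dualSolution (γ m : ℝ) : ℝ → ℝ := (Ioc γ 1).indicator fun _ => m / (1 - γ)

section DualSolution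

variable {γ m : ℝ}

lemma memLp_dualSolution : MemLp (dualSolution γ m) 2 mu :=
  memLp_indicator_const 2 measurableSet_Ioc _ (Or.inr (mu_ne_top _))

lemma setIntegral_dualSolution (A : Set ℝ) :
    ∫ t in A, dualSolution γ m t ∂mu = mu.real (A ∩ Ioc γ 1) * (m / (1 - γ)) := by
  rw [dualSolution, setIntegral_indicator measurableSet_Ioc, setIntegral_const,
    smul_eq_mul]

lemma setIntegral_dualSolution_of_subset (hγ0 : 0 ≤ γ) (hγ1 : γ < 1) {S : Set ℝ}
    (hSγ : Ioc γ 1 ⊆ S) : ∫ t in S, dualSolution γ m t ∂mu = m := by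
  rw [setIntegral_dualSolution, inter_eq_right.2 hSγ, mu_real_Ioc hγ0 le_rfl,
    max_eq_left (by linarith)]
  field_simp [show 1 - γ ≠ 0 by linarith]

lemma integral_dualSolution (hγ0 : 0 ≤ γ) (hγ1 : γ < 1) : ∫ t, dualSolution γ m t ∂mu = m := by
  simpa using setIntegral_dualSolution_of_subset (m := m) hγ0 hγ1 (subset_univ _)

lemma setIntegral_Ioc_zero_dualSolution_le (hγ0 : 0 ≤ γ) (hγ1 : γ < 1) (hm1 : m ≤ 1)
    {t : ℝ} (ht0 : 0 ≤ t) (ht1 : t ≤ 1) :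
    ∫ s in Ioc 0 t, dualSolution γ m s ∂mu ≤ t := by
  rw [setIntegral_dualSolution, Ioc_inter_Ioc, max_eq_right hγ0,
    min_eq_left ht1, mu_real_Ioc hγ0 ht1]
  have h1γ : 0 < 1 - γ := by linarith
  -- `m (t - γ) / (1 - γ) ≤ t` is affine in `t` and holds at `t = γ` and at `t = 1`
  rcases le_total t γ with h | h
  · rw [max_eq_right (by linarith), zero_mul]
    exact ht0
  · rw [max_eq_left (by linarith), mul_div_assoc', div_le_iff₀ h1γ]
    nlinarith [mul_nonneg (sub_nonneg.2 hm1) (sub_nonneg.2 h), mul_nonneg hγ0 (sub_nonneg.2 ht1)]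

lemma dFeas_dualSolution {α : ℝ} (hγ0 : 0 ≤ γ) (hγ1 : γ < 1) (hm0 : 0 ≤ m) (hm1 : m ≤ 1)
    (hmα : m ≤ α) : DFeas α (dualSolution γ m) := by
  refine ⟨memLp_dualSolution, ae_of_all _ (indicator_nonneg fun _ _ => by
    have : 0 < 1 - γ := by linarith
    positivity), ?_, (integral_dualSolution hγ0 hγ1).trans_le hmα⟩
  filter_upwards [ae_mem_Icc_mu] with t ht
  exact setIntegral_Ioc_zero_dualSolution_le hγ0 hγ1 hm1 ht.1 ht.2

end DualSolution

lemma mu_restrict_Ioc_zero_one : mu.restrict (Ioc 0 1) = mu := by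
  rw [mu, Measure.restrict_restrict measurableSet_Ioc, inter_eq_left.2 Ioc_subset_Icc_self]
  exact Measure.restrict_congr_set Ioc_ae_eq_Icc

lemma integral_le_one_of_dFeas {α : ℝ} {z : ℝ → ℝ} (hz : DFeas α z) : ∫ t, z t ∂mu ≤ 1 := by
  have hcont : Continuous fun t => ∫ s in 0..t, z s ∂mu :=
    intervalIntegral.continuous_primitive
      (fun _ _ => (hz.1.integrable one_le_two).intervalIntegrable) 0
  have hle : ∫ s in 0..1, z s ∂mu ≤ 1 :=
    le_of_tendsto_of_tendsto_of_frequently ((hcont.tendsto 1).mono_left nhdsWithin_le_nhds)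
      (tendsto_id.mono_left nhdsWithin_le_nhds)
      ((frequently_nhdsLT_one_of_ae (hz.2.2.1.and ae_mem_Icc_mu)).mono fun t ⟨h, ht⟩ => by
        rwa [intervalIntegral.integral_of_le ht.1])
  rwa [intervalIntegral.integral_of_le zero_le_one, mu_restrict_Ioc_zero_one] at hle

lemma setIntegral_le_min_of_dFeas {α : ℝ} {z : ℝ → ℝ} (hz : DFeas α z) (S : Set ℝ) :
    ∫ t in S, z t ∂mu ≤ min 1 α := by
  have h := setIntegral_le_integral (s := S) (hz.1.integrable one_le_two) hz.2.1
  exact le_min (h.trans (integral_le_one_of_dFeas hz)) (h.trans hz.2.2.2)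

lemma integral_indicator_one_mul {S : Set ℝ} (hS : MeasurableSet S) (z : ℝ → ℝ) :
    ∫ t, S.indicator 1 t * z t ∂mu = ∫ t in S, z t ∂mu := by
  rw [← integral_indicator hS]
  congr 1
  ext t
  by_cases ht : t ∈ S <;> simp [ht]

section Fubini

variable {x z : ℝ → ℝ}

lemma integrable_indicator_lt_mul_prod (hx : Integrable x mu) (hz : Integrable z mu) :
    Integrable ({q : ℝ × ℝ | q.1 < q.2}.indicator fun q => z q.1 * x q.2) (mu.prod mu) :=
  (hz.mul_prod hx).indicator (measurableSet_lt measurable_fst measurable_snd)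

lemma integral_indicator_lt_mul_left (t : ℝ) :
    ∫ s, {q : ℝ × ℝ | q.1 < q.2}.indicator (fun q => z q.1 * x q.2) (t, s) ∂mu =
      (∫ s in Ioc t 1, x s ∂mu) * z t := by
  have : (fun s => {q : ℝ × ℝ | q.1 < q.2}.indicator (fun q => z q.1 * x q.2) (t, s)) =
      (Ioi t).indicator fun s => z t * x s := by
    ext s
    by_cases h : t < s <;> simp [indicator, h]
  rw [this, integral_indicator measurableSet_Ioi, mu_restrict_Ioi, integral_const_mul, mul_comm]

lemma integral_indicator_lt_mul_right {s : ℝ} (hs : s ≤ 1) :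
    ∫ t, {q : ℝ × ℝ | q.1 < q.2}.indicator (fun q => z q.1 * x q.2) (t, s) ∂mu =
      (∫ t in Ioc 0 s, z t ∂mu) * x s := by
  have : (fun t => {q : ℝ × ℝ | q.1 < q.2}.indicator (fun q => z q.1 * x q.2) (t, s)) =
      (Iio s).indicator fun t => z t * x s := by
    ext t
    by_cases h : t < s <;> simp [indicator, h]
  rw [this, integral_indicator measurableSet_Iio, mu_restrict_Iio hs, integral_mul_const]

end Fubini

theorem integral_mul_le_cost {α : ℝ} {z : ℝ → ℝ} (hz : DFeas α z) {y : ℝ → ℝ}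
    (hy : MemLp y 2 mu) {p : (ℝ → ℝ) × ℝ} (hp : Feas y p) : ∫ t, y t * z t ∂mu ≤ cost α p := by
  obtain ⟨hz2, hz0, hzF, hzα⟩ := hz
  obtain ⟨hx2, hx0, hr0, hcon⟩ := hp
  have hx := hx2.integrable one_le_two
  have hzi := hz2.integrable one_le_two
  have hF := integrable_indicator_lt_mul_prod hx hzi
  have hG : Integrable (fun t => (∫ s in Ioc t 1, p.1 s ∂mu) * z t) mu :=
    hF.integral_prod_left.congr (ae_of_all _ integral_indicator_lt_mul_left)
  have hswap : ∫ t, (∫ s in Ioc t 1, p.1 s ∂mu) * z t ∂mu =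
      ∫ s, (∫ t in Ioc 0 s, z t ∂mu) * p.1 s ∂mu := by
    simp_rw [← integral_indicator_lt_mul_left]
    rw [integral_integral_swap (by exact hF)]
    exact integral_congr_ae <| by
      filter_upwards [ae_mem_Icc_mu] with s hs using integral_indicator_lt_mul_right hs.2
  calc ∫ t, y t * z t ∂mu
      ≤ ∫ t, (∫ s in Ioc t 1, p.1 s ∂mu) * z t + p.2 * z t ∂mu := by
        refine integral_mono_ae (hy.integrable_mul hz2) (hG.add (hzi.const_mul _)) ?_
        filter_upwards [hcon, hz0] with t ht hzt
        rw [← add_mul]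
        exact mul_le_mul_of_nonneg_right ht hzt
    _ = ∫ s, (∫ t in Ioc 0 s, z t ∂mu) * p.1 s ∂mu + p.2 * ∫ t, z t ∂mu := by
        rw [integral_add hG (hzi.const_mul _), integral_const_mul, hswap]
    _ ≤ ∫ s, s * p.1 s ∂mu + p.2 * α := by
        refine add_le_add (integral_mono_of_nonneg ?_ ?_ ?_)
          (mul_le_mul_of_nonneg_left hzα hr0)
        · filter_upwards [hx0] with s hs using
            mul_nonneg (setIntegral_nonneg_of_ae_restrict (ae_restrict_of_ae hz0)) hs
        · exact hx.bdd_mul (c := 1) measurable_id.aestronglyMeasurable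
            (by filter_upwards [ae_mem_Icc_mu] with s hs
                simpa [abs_of_nonneg hs.1] using hs.2)
        · filter_upwards [hzF, hx0] with s hs hxs using mul_le_mul_of_nonneg_right hs hxs
    _ = cost α p := by rw [cost, mul_comm]

section Indicator

variable {S : Set ℝ}

lemma coeFn_chiLp (hS : MeasurableSet S) : ⇑(chiLp S hS) =ᵐ[mu] S.indicator 1 :=
  indicatorConstLp_coeFn

lemma chiLp_le_one (hS : MeasurableSet S) : ∀ᵐ t ∂mu, chiLp S hS t ≤ 1 := by
  filter_upwards [coeFn_chiLp hS] with t ht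
  by_cases h : t ∈ S <;> simp [ht, h]

lemma inner_chiLp (hS : MeasurableSet S) (z : Lp ℝ 2 mu) :
    inner ℝ (chiLp S hS) z = ∫ t in S, z t ∂mu :=
  L2.inner_indicatorConstLp_one hS _ z

lemma val_chiLp {α γ : ℝ} (hα : 0 ≤ α) (hγ : γ < 1) (hS : MeasurableSet S)
    (hSγ : Ioo γ 1 ⊆ S) : val α (chiLp S hS) = α := by
  refine val_eq_of_le_one hα hγ (chiLp_le_one hS) ?_
  filter_upwards [coeFn_chiLp hS] with t ht htγ
  simp [ht, hSγ htγ]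

lemma valD_indicator {α γ : ℝ} (hα : 0 ≤ α) (hγ0 : 0 ≤ γ) (hγ1 : γ < 1) (hS : MeasurableSet S)
    (hSγ : Ioc γ 1 ⊆ S) : valD α (S.indicator 1) = (min 1 α : ℝ) := by
  refine le_antisymm (iSup₂_le fun z hz => ?_) (le_iSup₂_of_le (dualSolution γ (min 1 α))
    (dFeas_dualSolution hγ0 hγ1 (le_min zero_le_one hα) (min_le_left _ _) (min_le_right _ _)) ?_)
  · rw [integral_indicator_one_mul hS]
    exact EReal.coe_le_coe_iff.2 (setIntegral_le_min_of_dFeas hz S)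
  · rw [integral_indicator_one_mul hS, setIntegral_dualSolution_of_subset hγ0 hγ1 hSγ]

lemma toLp_dualSolution_mem_subdiffL2 {α γ : ℝ} (hα0 : 0 ≤ α) (hα1 : α ≤ 1) (hγ0 : 0 ≤ γ)
    (hγ1 : γ < 1) (hS : MeasurableSet S) (hSγ : Ioc γ 1 ⊆ S) :
    memLp_dualSolution.toLp (dualSolution γ α) ∈ subdiffL2 α (chiLp S hS) := by
  have hz := MemLp.coeFn_toLp (memLp_dualSolution (γ := γ) (m := α))
  refine ⟨α, val_chiLp hα0 hγ1 hS (Ioo_subset_Ioc_self.trans hSγ), fun y => ?_⟩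
  have hbz : inner ℝ (chiLp S hS) (memLp_dualSolution.toLp (dualSolution γ α)) = α := by
    rw [inner_chiLp, integral_congr_ae (ae_restrict_of_ae hz)]
    exact setIntegral_dualSolution_of_subset hγ0 hγ1 hSγ
  have hyz : inner ℝ y (memLp_dualSolution.toLp (dualSolution γ α)) =
      ∫ t, y t * dualSolution γ α t ∂mu := by
    rw [L2.inner_def]
    exact integral_congr_ae (by filter_upwards [hz] with t ht; simp [ht, mul_comm])
  rw [inner_sub_left, hbz, sub_add_cancel, hyz]
  exact le_val fun p hp => integral_mul_le_cost
    (dFeas_dualSolution hγ0 hγ1 hα0 hα1 le_rfl) (Lp.memLp y) hp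

lemma le_one_add_of_subgradient {α r : ℝ} (hS : MeasurableSet S) {z : Lp ℝ 2 mu}
    (hz : ∀ y, ((inner ℝ (y - chiLp S hS) z + r : ℝ) : EReal) ≤ val α y) {t : ℝ}
    (ht0 : 0 ≤ t) (ht1 : t < 1) : r ≤ 1 + ∫ s in Ioc t 1, |z s| ∂mu := by
  have hzi : Integrable z mu := (Lp.memLp z).integrable one_le_two
  have hT : MeasurableSet (S \ Ioc t 1) := hS.diff measurableSet_Ioc
  have hval : val α (chiLp (S \ Ioc t 1) hT) ≤ 1 := by
    refine val_le_one ht0 ht1 (chiLp_le_one hT) ?_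
    filter_upwards [coeFn_chiLp hT, ae_mem_Icc_mu] with s hs hs1 hts
    simp [hs, hts, hs1.2]
  have hinner : inner ℝ (chiLp (S \ Ioc t 1) hT - chiLp S hS) z =
      -∫ s in S ∩ Ioc t 1, z s ∂mu := by
    rw [inner_sub_left, inner_chiLp, inner_chiLp,
      ← integral_inter_add_sdiff (s := S) measurableSet_Ioc hzi.integrableOn]
    ring
  have htail : ∫ s in S ∩ Ioc t 1, z s ∂mu ≤ ∫ s in Ioc t 1, |z s| ∂mu :=
    (le_abs_self _).trans <| abs_integral_le_integral_abs.trans <|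
      setIntegral_mono_set hzi.abs.integrableOn (ae_of_all _ fun _ => abs_nonneg _)
        inter_subset_right.eventuallyLE
  have h := (hz _).trans hval
  rw [hinner] at h
  have : -(∫ s in S ∩ Ioc t 1, z s ∂mu) + r ≤ 1 := by exact_mod_cast h
  linarith

lemma val_chiLp_le_one_of_mem_subdiffL2 {α : ℝ} (hS : MeasurableSet S) {z : Lp ℝ 2 mu}
    (hz : z ∈ subdiffL2 α (chiLp S hS)) : val α (chiLp S hS) ≤ 1 := by
  obtain ⟨r, hr, hsub⟩ := hz
  rw [hr, ← EReal.coe_one, EReal.coe_le_coe_iff]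
  have hlim : Tendsto (fun t => 1 + ∫ s in Ioc t 1, |z s| ∂mu) (𝓝[<] 1) (𝓝 1) := by
    simpa using (tendsto_setIntegral_Ioc_one ((Lp.memLp z).integrable one_le_two).abs).const_add 1
  exact ge_of_tendsto hlim <| eventually_of_mem (Ico_mem_nhdsLT zero_lt_one) fun t ht =>
    le_one_add_of_subgradient hS hsub ht.1 ht.2

end Indicator

/-- In Kretschmer's setting with `α > 0`, for `0 ≤ δ ≤ γ < 1` and
`b := χ_{[0,δ] ∪ [γ,1]}`: `val(P_b) = α` with optimal solution `(0,1)`;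
`val(D_b) = min{1,α}` and `(D_b)` has an optimal solution; and
`val(P_b) = val(D_b)` iff `α ≤ 1` iff `∂v(b) ≠ ∅`. -/
theorem stmt17 (α δ γ : ℝ) (hα : 0 < α) (hδ : 0 ≤ δ) (hδγ : δ ≤ γ) (hγ : γ < 1) :
    val α (chiLp (Set.Icc 0 δ ∪ Set.Icc γ 1)
        ((measurableSet_Icc).union measurableSet_Icc)) = ((α : ℝ) : EReal) ∧
    (Feas (⇑(chiLp (Set.Icc 0 δ ∪ Set.Icc γ 1)
        ((measurableSet_Icc).union measurableSet_Icc))) ((fun _ => 0), 1) ∧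
      ((cost α ((fun _ => 0), 1) : ℝ) : EReal) =
        val α (chiLp (Set.Icc 0 δ ∪ Set.Icc γ 1)
          ((measurableSet_Icc).union measurableSet_Icc))) ∧
    valD α ((Set.Icc 0 δ ∪ Set.Icc γ 1).indicator 1) = ((min 1 α : ℝ) : EReal) ∧
    (∃ z : ℝ → ℝ, DFeas α z ∧
      ((∫ t, (Set.Icc 0 δ ∪ Set.Icc γ 1).indicator 1 t * z t ∂mu : ℝ) : EReal) =
        valD α ((Set.Icc 0 δ ∪ Set.Icc γ 1).indicator 1)) ∧
    ((val α (chiLp (Set.Icc 0 δ ∪ Set.Icc γ 1)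
        ((measurableSet_Icc).union measurableSet_Icc)) =
      valD α ((Set.Icc 0 δ ∪ Set.Icc γ 1).indicator 1)) ↔ α ≤ 1) ∧
    ((val α (chiLp (Set.Icc 0 δ ∪ Set.Icc γ 1)
        ((measurableSet_Icc).union measurableSet_Icc)) =
      valD α ((Set.Icc 0 δ ∪ Set.Icc γ 1).indicator 1)) ↔
      (subdiffL2 α (chiLp (Set.Icc 0 δ ∪ Set.Icc γ 1)
        ((measurableSet_Icc).union measurableSet_Icc))).Nonempty) := by
  have hS : MeasurableSet (Icc 0 δ ∪ Icc γ 1) := measurableSet_Icc.union measurableSet_Icc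
  have hγ0 : 0 ≤ γ := hδ.trans hδγ
  have hSγ : Ioc γ 1 ⊆ Icc 0 δ ∪ Icc γ 1 := Ioc_subset_Icc_self.trans subset_union_right
  have hval : val α (chiLp _ hS) = α := val_chiLp hα.le hγ hS (Ioo_subset_Ioc_self.trans hSγ)
  have hvalD := valD_indicator hα.le hγ0 hγ hS hSγ
  have hgap : val α (chiLp _ hS) = valD α ((Icc 0 δ ∪ Icc γ 1).indicator 1) ↔ α ≤ 1 := by
    rw [hval, hvalD, EReal.coe_eq_coe_iff, eq_comm, min_eq_right_iff]
  have hsubdiff : (subdiffL2 α (chiLp _ hS)).Nonempty ↔ α ≤ 1 := by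
    refine ⟨fun ⟨z, hz⟩ => ?_, fun hα1 =>
      ⟨_, toLp_dualSolution_mem_subdiffL2 hα.le hα1 hγ0 hγ hS hSγ⟩⟩
    have := val_chiLp_le_one_of_mem_subdiffL2 hS hz
    rwa [hval, ← EReal.coe_one, EReal.coe_le_coe_iff] at this
  refine ⟨hval, ⟨feas_zero_one (chiLp_le_one hS), by rw [cost_zero_one, hval]⟩, hvalD,
    ⟨dualSolution γ (min 1 α), dFeas_dualSolution hγ0 hγ (le_min zero_le_one hα.le)
      (min_le_left _ _) (min_le_right _ _), ?_⟩, hgap, hgap.trans hsubdiff.symm⟩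
  rw [integral_indicator_one_mul hS, setIntegral_dualSolution_of_subset hγ0 hγ hSγ, hvalD]
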